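/- Let P and Δ be real-valued random variables with finite second moments such that 0 ≤ P ≤ m_φ almost surely, |Δ| ≤ m_Δ almost surely, and Var(P) ≤ k·Var(Δ) for some constants m_φ, m_Δ, k ≥ 0. Then the random variable S = P·Δ satisfies √Var(S) ≤ (2·m_φ + √k·m_Δ)·√Var(Δ). -/

import Mathlib

/-!
Write `P Δ = P (Δ - 𝔼Δ) + 𝔼Δ · P`. Standard deviation is subadditive (Cauchy–Schwarz for the
covariance); the first summand has variance at most `𝔼[P² (Δ - 𝔼Δ)²] ≤ m_φ² Var Δ`, and the second
has standard deviation `|𝔼Δ| √Var P ≤ m_Δ √k √Var Δ`.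
-/

open MeasureTheory ProbabilityTheory

namespace ProbabilityTheory

variable {Ω : Type*} {mΩ : MeasurableSpace Ω} {μ : Measure Ω} {X Y : Ω → ℝ}

lemma covariance_sq_le_variance_mul_variance [IsFiniteMeasure μ] (hX : MemLp X 2 μ)
    (hY : MemLp Y 2 μ) : cov[X, Y; μ] ^ 2 ≤ Var[X; μ] * Var[Y; μ] := by
  have hquad : ∀ t : ℝ, 0 ≤ Var[X; μ] * (t * t) + 2 * cov[X, Y; μ] * t + Var[Y; μ] := by
    intro t
    have h := variance_nonneg (t • X + Y) μ
    rw [variance_add (hX.const_smul t) hY, variance_smul, covariance_smul_left] at h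
    linarith
  have := discrim_le_zero hquad
  rw [discrim] at this
  linarith

lemma sqrt_variance_add_le [IsFiniteMeasure μ] (hX : MemLp X 2 μ) (hY : MemLp Y 2 μ) :
    √Var[X + Y; μ] ≤ √Var[X; μ] + √Var[Y; μ] := by
  have hcov : cov[X, Y; μ] ≤ √Var[X; μ] * √Var[Y; μ] := by
    rw [← Real.sqrt_mul (variance_nonneg X μ)]
    exact (le_abs_self _).trans (Real.abs_le_sqrt (covariance_sq_le_variance_mul_variance hX hY))
  rw [Real.sqrt_le_left (by positivity), variance_add hX hY, add_sq,
    Real.sq_sqrt (variance_nonneg X μ), Real.sq_sqrt (variance_nonneg Y μ)]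
  linarith

lemma variance_mul_sub_integral_le [IsProbabilityMeasure μ] {c : ℝ}
    (hX : AEStronglyMeasurable X μ) (hY : MemLp Y 2 μ) (hXc : ∀ᵐ ω ∂μ, |X ω| ≤ c) :
    Var[fun ω ↦ X ω * (Y ω - μ[Y]); μ] ≤ c ^ 2 * Var[Y; μ] := by
  calc Var[fun ω ↦ X ω * (Y ω - μ[Y]); μ]
      ≤ μ[(fun ω ↦ X ω * (Y ω - μ[Y])) ^ 2] :=
        variance_le_expectation_sq (hX.mul (hY.1.sub aestronglyMeasurable_const))
    _ ≤ ∫ ω, c ^ 2 * (Y ω - μ[Y]) ^ 2 ∂μ := by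
        refine integral_mono_of_nonneg (.of_forall fun ω ↦ sq_nonneg _)
          ((hY.sub (memLp_const _)).integrable_sq.const_mul _) ?_
        filter_upwards [hXc] with ω hω
        simp only [Pi.pow_apply, mul_pow]
        exact mul_le_mul_of_nonneg_right (sq_le_sq' (abs_le.mp hω).1 (abs_le.mp hω).2)
          (sq_nonneg _)
    _ = c ^ 2 * Var[Y; μ] := by rw [integral_const_mul, variance_eq_integral hY.aemeasurable]

end ProbabilityTheory

theorem sqrt_variance_mul_le_general {Ω : Type*} [MeasureSpace Ω]
    [IsProbabilityMeasure (ℙ : Measure Ω)]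
    (P Δ : Ω → ℝ) (hP : MemLp P 2 ℙ) (hΔ : MemLp Δ 2 ℙ)
    (mφ mΔ k : ℝ) (hmφ : 0 ≤ mφ)
    (hPbd : ∀ᵐ ω ∂ℙ, 0 ≤ P ω ∧ P ω ≤ mφ)
    (hΔbd : ∀ᵐ ω ∂ℙ, |Δ ω| ≤ mΔ)
    (hvar : variance P ℙ ≤ k * variance Δ ℙ) :
    Real.sqrt (variance (fun ω => P ω * Δ ω) ℙ)
      ≤ (2 * mφ + Real.sqrt k * mΔ) * Real.sqrt (variance Δ ℙ) := by
  set EΔ := ℙ[Δ]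
  have hPabs : ∀ᵐ ω ∂ℙ, |P ω| ≤ mφ := hPbd.mono fun ω h ↦ abs_le.mpr ⟨by linarith, h.2⟩
  have hEΔ : |EΔ| ≤ mΔ := by
    simpa using norm_integral_le_of_norm_le_const (f := Δ) (C := mΔ) (μ := ℙ) hΔbd
  have hcentered : √Var[fun ω ↦ P ω * (Δ ω - EΔ); ℙ] ≤ mφ * √Var[Δ; ℙ] := by
    rw [← Real.sqrt_sq hmφ, ← Real.sqrt_mul (sq_nonneg _)]
    exact Real.sqrt_le_sqrt (variance_mul_sub_integral_le hP.1 hΔ hPabs)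
  have hmean : √Var[fun ω ↦ EΔ * P ω; ℙ] ≤ mΔ * (√k * √Var[Δ; ℙ]) := by
    rw [variance_const_mul, Real.sqrt_mul (sq_nonneg _), Real.sqrt_sq_eq_abs,
      ← Real.sqrt_mul' k (variance_nonneg Δ ℙ)]
    exact mul_le_mul hEΔ (Real.sqrt_le_sqrt hvar) (Real.sqrt_nonneg _)
      ((abs_nonneg _).trans hEΔ)
  have hPbounded : MemLp P ⊤ ℙ := memLp_top_of_bound hP.1 mφ hPabs
  have hsplit : (fun ω ↦ P ω * Δ ω) = (fun ω ↦ P ω * (Δ ω - EΔ)) + fun ω ↦ EΔ * P ω := by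
    ext ω; simp only [Pi.add_apply]; ring
  calc √Var[fun ω ↦ P ω * Δ ω; ℙ]
      ≤ √Var[fun ω ↦ P ω * (Δ ω - EΔ); ℙ] + √Var[fun ω ↦ EΔ * P ω; ℙ] := by
        rw [hsplit]
        exact sqrt_variance_add_le ((hΔ.sub (memLp_const EΔ)).mul' hPbounded) (hP.const_mul EΔ)
    _ ≤ (2 * mφ + √k * mΔ) * √Var[Δ; ℙ] := by
        nlinarith [Real.sqrt_nonneg (Var[Δ; ℙ])]

/-- Key variance bound: if `0 ≤ P ≤ m_φ` a.s., `|Δ| ≤ m_Δ` a.s., and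
`Var P ≤ k · Var Δ`, then `√Var(P·Δ) ≤ (2 m_φ + √k · m_Δ) · √Var Δ`. -/
theorem sqrt_variance_mul_le {Ω : Type*} [MeasureSpace Ω]
    [IsProbabilityMeasure (ℙ : Measure Ω)]
    (P Δ : Ω → ℝ) (hP : MemLp P 2 ℙ) (hΔ : MemLp Δ 2 ℙ)
    (mφ mΔ k : ℝ) (hmφ : 0 ≤ mφ) (hmΔ : 0 ≤ mΔ) (hk : 0 ≤ k)
    (hPbd : ∀ᵐ ω ∂ℙ, 0 ≤ P ω ∧ P ω ≤ mφ)
    (hΔbd : ∀ᵐ ω ∂ℙ, |Δ ω| ≤ mΔ)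
    (hvar : variance P ℙ ≤ k * variance Δ ℙ) :
    Real.sqrt (variance (fun ω => P ω * Δ ω) ℙ)
      ≤ (2 * mφ + Real.sqrt k * mΔ) * Real.sqrt (variance Δ ℙ) :=
  sqrt_variance_mul_le_general P Δ hP hΔ mφ mΔ k hmφ hPbd hΔbd hvar
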